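/- arXiv:2503.03069 — 3 statements merged into one kernel-verified Lean document; each statement's English description precedes it below -/
import Mathlib

section
/- Fix a discretization and indices q̂ ∈ {0,…,N_φ−1} and p̂ ∈ {0,…,N_s−1}. Then Σ_{i,j=0}^{N_x−1} ω^rd(φ_{q̂}, x_{ij}·θ_{q̂} − s_{p̂}) ≤ √8 / δ_x². -/
open MeasureTheory Real Set Filter
open scoped BigOperators ENNReal Topology

noncomputable section

/-- The spatial domain: the open Euclidean unit ball in the plane. -/
def Omg : Set (ℝ × ℝ) := {x : ℝ × ℝ | x.1 ^ 2 + x.2 ^ 2 < 1}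

/-- The sinogram domain `[0,π) × (−1,1)`. -/
def Sino : Set (ℝ × ℝ) := Ico (0 : ℝ) π ×ˢ Ioo (-1 : ℝ) 1

/-- `κ(φ) = min(1/|cos φ|, 1/|sin φ|)`. -/
def kap (φ : ℝ) : ℝ := min (1 / |cos φ|) (1 / |sin φ|)

/-- `s̄(φ) = (δ_x/2)(|cos φ| + |sin φ|)`. -/
def sbar (dx φ : ℝ) : ℝ := dx / 2 * (|cos φ| + |sin φ|)

/-- `s̲(φ) = (δ_x/2)·||cos φ| − |sin φ||`. -/
def sund (dx φ : ℝ) : ℝ := dx / 2 * |(|cos φ| - |sin φ|)|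

open Classical in
/-- The ray-driven weight function `ω^rd(φ,t)` (for spatial resolution `dx`). -/
def wrd (dx φ t : ℝ) : ℝ :=
  (1 / dx) *
    (if |t| < sund dx φ then kap φ
    else if |t| < sbar dx φ then (sbar dx φ - |t|) / (dx * |cos φ * sin φ|)
    else if (∃ k : ℤ, φ = k * (π / 2)) ∧ |t| = sbar dx φ then 1 / 2
    else 0)

/-- The pixel-driven weight function `ω^pd(t)` (for detector resolution `ds`). -/
def wpd (ds t : ℝ) : ℝ := (1 / ds ^ 2) * max (ds - |t|) 0

/-- The Radon transform, as a pointwise line-integral formula: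
`[Rf](φ,s) = ∫ f(s·θ_φ + t·θ_φ^⊥) dt`. -/
def Radon (f : ℝ × ℝ → ℝ) (φ s : ℝ) : ℝ :=
  ∫ t : ℝ, f (s * cos φ - t * sin φ, s * sin φ + t * cos φ)

/-- The backprojection `[R*g](x) = ∫_0^π g(φ, x·θ_φ) dφ`. -/
def Backproj (g : ℝ × ℝ → ℝ) (x : ℝ × ℝ) : ℝ :=
  ∫ φ in Ico (0 : ℝ) π, g (φ, x.1 * cos φ + x.2 * sin φ)

/-- A discretization: spatial resolution `N_x`, detector resolution `N_s`, and
`N_φ` strictly increasing angles in `[0,π)`. -/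
structure Disc where
  Nx : ℕ
  Nx_pos : 0 < Nx
  Ns : ℕ
  Ns_pos : 0 < Ns
  Nphi : ℕ
  Nphi_pos : 0 < Nphi
  ang : ℕ → ℝ
  ang_mono : ∀ q q', q < q' → q' < Nphi → ang q < ang q'
  ang_mem : ∀ q, q < Nphi → ang q ∈ Ico (0 : ℝ) π

namespace Disc

variable (D : Disc)

/-- Spatial resolution `δ_x = 2/N_x`. -/
def dx : ℝ := 2 / D.Nx

/-- Detector resolution `δ_s = 2/N_s`. -/
def ds : ℝ := 2 / D.Ns

/-- Pixel centers `x_{ij}`. -/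
def xc (i j : ℕ) : ℝ × ℝ := ((i + 1 / 2) * D.dx - 1, (j + 1 / 2) * D.dx - 1)

/-- Spatial pixels `X_{ij}` (closed squares with center `x_{ij}` and side `δ_x`). -/
def Xpix (i j : ℕ) : Set (ℝ × ℝ) :=
  Icc ((D.xc i j).1 - D.dx / 2) ((D.xc i j).1 + D.dx / 2) ×ˢ
    Icc ((D.xc i j).2 - D.dx / 2) ((D.xc i j).2 + D.dx / 2)

/-- Detector pixel centers `s_p`. -/
def sc (p : ℕ) : ℝ := (p + 1 / 2) * D.ds - 1

/-- Detector pixels `S_p`. -/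
def Spix (p : ℕ) : Set ℝ := Ico (D.sc p - D.ds / 2) (D.sc p + D.ds / 2)

/-- Lower endpoint of the angular pixel `Φ_q`. -/
def philow (q : ℕ) : ℝ := if q = 0 then 0 else (D.ang (q - 1) + D.ang q) / 2

/-- Upper endpoint of the angular pixel `Φ_q`. -/
def phihigh (q : ℕ) : ℝ := if q = D.Nphi - 1 then π else (D.ang q + D.ang (q + 1)) / 2

/-- Angular pixels `Φ_q`. -/
def Phipix (q : ℕ) : Set ℝ := Ico (D.philow q) (D.phihigh q)

/-- Angular resolution `δ_φ = max_q |Φ_q|`. -/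
def dphi : ℝ :=
  (Finset.range D.Nphi).sup' (Finset.nonempty_range_iff.mpr D.Nphi_pos.ne')
    fun q => D.phihigh q - D.philow q

/-- The argument `x_{ij}·θ_q − s_p` at which weights are evaluated. -/
def off (i j q p : ℕ) : ℝ :=
  (D.xc i j).1 * cos (D.ang q) + (D.xc i j).2 * sin (D.ang q) - D.sc p

/-- Generic convolutional discretization of the Radon transform with weight `w`. -/
def discRadon (w : ℝ → ℝ → ℝ) (f : ℝ × ℝ → ℝ) (y : ℝ × ℝ) : ℝ :=
  ∑ q ∈ Finset.range D.Nphi, ∑ p ∈ Finset.range D.Ns,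
    Set.indicator (D.Phipix q ×ˢ D.Spix p) (fun _ => (1 : ℝ)) y *
      ∑ i ∈ Finset.range D.Nx, ∑ j ∈ Finset.range D.Nx,
        w (D.ang q) (D.off i j q p) * ∫ x in D.Xpix i j, f x

/-- Generic convolutional discretization of the backprojection with weight `w`. -/
def discBackproj (w : ℝ → ℝ → ℝ) (g : ℝ × ℝ → ℝ) (x : ℝ × ℝ) : ℝ :=
  ∑ i ∈ Finset.range D.Nx, ∑ j ∈ Finset.range D.Nx,
    Set.indicator (D.Xpix i j) (fun _ => (1 : ℝ)) x *
      ∑ q ∈ Finset.range D.Nphi, ∑ p ∈ Finset.range D.Ns,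
        w (D.ang q) (D.off i j q p) * ∫ y in D.Phipix q ×ˢ D.Spix p, g y

end Disc

/-!
Off the axes, `δ_x² |cos φ sin φ| · ω^rd(φ, t)` is the overlap of an interval of half-width
`δ_x |cos φ| / 2` centred at `t` with one of half-width `δ_x |sin φ| / 2` centred at `0`, i.e. a
difference of two clipped values. Along a pixel row on which `x_{ij}·θ` moves in steps of
`δ_x cos φ` these differences telescope, so the row sum is at most `1 / (δ_x |cos φ|)`. Taking the
rows along the axis with `|cos φ| ≥ |sin φ|` (the other case follows by `φ ↦ π/2 - φ`), the `N_x`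
rows contribute at most `N_x / (δ_x |cos φ|) ≤ √2 N_x / δ_x = √8 / δ_x²`. On the axes the weight is
dominated by the triangle of overlaps of two intervals of half-width `δ_x / 2`, and the same
telescoping applies.
-/

namespace RayWeight

def clip (c x : ℝ) : ℝ := max (-c) (min c x)

/-- For `0 ≤ h` and `0 ≤ c`, the length of `[t - h, t + h] ∩ [-c, c]`. -/
def boxOverlap (h c t : ℝ) : ℝ := clip c (t + h) - clip c (t - h)

lemma neg_le_clip (c x : ℝ) : -c ≤ clip c x := le_max_left _ _

lemma clip_le {c : ℝ} (hc : 0 ≤ c) (x : ℝ) : clip c x ≤ c :=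
  max_le (by linarith) (min_le_left _ _)

lemma boxOverlap_neg (h c t : ℝ) : boxOverlap h c (-t) = boxOverlap h c t := by
  simp only [boxOverlap, clip, max_def, min_def]
  split_ifs <;> linarith

lemma boxOverlap_eq_ite {h c : ℝ} (hh : 0 ≤ h) (hc : 0 ≤ c) (t : ℝ) :
    boxOverlap h c t =
      if |t| < |h - c| then 2 * min h c else if |t| < h + c then h + c - |t| else 0 := by
  wlog ht : 0 ≤ t generalizing t
  · simpa only [boxOverlap_neg, abs_neg] using this (-t) (by linarith)
  rw [abs_of_nonneg ht]
  rcases le_total h c with hhc | hhc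
  · rw [abs_of_nonpos (by linarith), min_eq_left hhc]
    simp only [boxOverlap, clip, max_def, min_def]
    split_ifs <;> linarith
  · rw [abs_of_nonneg (by linarith), min_eq_right hhc]
    simp only [boxOverlap, clip, max_def, min_def]
    split_ifs <;> linarith

lemma sum_range_boxOverlap_le {c : ℝ} (hc : 0 ≤ c) (t₀ d : ℝ) (N : ℕ) :
    ∑ i ∈ Finset.range N, boxOverlap (|d| / 2) c (t₀ + i * d) ≤ 2 * c := by
  set F : ℕ → ℝ := fun n => clip c (t₀ + n * d - d / 2)
  have hF : ∀ m n, F m - F n ≤ 2 * c := fun m n => by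
    linarith [clip_le hc (t₀ + m * d - d / 2), neg_le_clip c (t₀ + n * d - d / 2)]
  rcases le_total 0 d with hd | hd
  · have hstep : ∀ i : ℕ, boxOverlap (|d| / 2) c (t₀ + i * d) = F (i + 1) - F i := fun i => by
      simp only [boxOverlap, F, abs_of_nonneg hd, Nat.cast_succ]; ring_nf
    simpa only [hstep, Finset.sum_range_sub] using hF N 0
  · have hstep : ∀ i : ℕ, boxOverlap (|d| / 2) c (t₀ + i * d) = F i - F (i + 1) := fun i => by
      simp only [boxOverlap, F, abs_of_nonpos hd, Nat.cast_succ]; ring_nf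
    simpa only [hstep, Finset.sum_range_sub'] using hF 0 N

lemma sum_range_le_of_le_boxOverlap {w : ℝ → ℝ} {d c K : ℝ} (hc : 0 ≤ c) (hK : 0 < K)
    (hw : ∀ t, w t ≤ boxOverlap (|d| / 2) c t / K) (t₀ : ℝ) (N : ℕ) :
    ∑ i ∈ Finset.range N, w (t₀ + i * d) ≤ 2 * c / K :=
  calc ∑ i ∈ Finset.range N, w (t₀ + i * d)
      ≤ ∑ i ∈ Finset.range N, boxOverlap (|d| / 2) c (t₀ + i * d) / K :=
        Finset.sum_le_sum fun _ _ => hw _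
    _ = (∑ i ∈ Finset.range N, boxOverlap (|d| / 2) c (t₀ + i * d)) / K :=
        (Finset.sum_div ..).symm
    _ ≤ 2 * c / K := by gcongr; exact sum_range_boxOverlap_le hc t₀ d N

lemma cos_mul_sin_eq_zero_of_eq_int_mul {φ : ℝ} (h : ∃ k : ℤ, φ = k * (π / 2)) :
    cos φ * sin φ = 0 := by
  obtain ⟨k, rfl⟩ := h
  have : sin (2 * (k * (π / 2))) = 0 := Real.sin_eq_zero_iff.mpr ⟨k, by ring⟩
  rw [sin_two_mul] at this
  linarith

lemma wrd_eq_boxOverlap {dx φ : ℝ} (hdx : 0 < dx) (hφ : cos φ * sin φ ≠ 0) (t : ℝ) :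
    wrd dx φ t =
      boxOverlap (dx * |cos φ| / 2) (dx * |sin φ| / 2) t / (dx ^ 2 * |cos φ| * |sin φ|) := by
  have ha : 0 < |cos φ| := abs_pos.mpr (left_ne_zero_of_mul hφ)
  have hb : 0 < |sin φ| := abs_pos.mpr (right_ne_zero_of_mul hφ)
  have hund : |dx * |cos φ| / 2 - dx * |sin φ| / 2| = sund dx φ := by
    rw [sund, ← abs_of_pos (half_pos hdx), ← abs_mul]
    ring_nf
  have hbar : dx * |cos φ| / 2 + dx * |sin φ| / 2 = sbar dx φ := by rw [sbar]; ring
  have hspecial : ¬ ∃ k : ℤ, φ = k * (π / 2) := fun h => hφ (cos_mul_sin_eq_zero_of_eq_int_mul h)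
  rw [wrd, boxOverlap_eq_ite (by positivity) (by positivity), hund, hbar, abs_mul]
  simp only [hspecial, false_and, if_false]
  split_ifs
  · rw [kap]
    rcases le_total |cos φ| |sin φ| with h | h
    · rw [min_eq_right (one_div_le_one_div_of_le ha h), min_eq_left (by gcongr)]
      field_simp
    · rw [min_eq_left (one_div_le_one_div_of_le hb h), min_eq_right (by gcongr)]
      field_simp
  · field_simp
  · simp

lemma wrd_le_boxOverlap_of_sin_eq_zero {dx φ : ℝ} (hdx : 0 < dx) (hφ : sin φ = 0) (t : ℝ) :
    wrd dx φ t ≤ boxOverlap (dx / 2) (dx / 2) t / dx ^ 2 := by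
  have hcos : |cos φ| = 1 := by
    rcases Real.sin_eq_zero_iff_cos_eq.mp hφ with h | h <;> simp [h]
  -- `1 / |sin φ| = 1 / 0 = 0`, so `kap φ = 0` and only the edge value `|t| = δ_x / 2` survives.
  have hkap : kap φ = 0 := by simp [kap, hcos, hφ]
  rw [wrd, hkap, sund, sbar, hcos, hφ, boxOverlap_eq_ite (by positivity) (by positivity)]
  simp only [abs_zero, sub_zero, add_zero, abs_one, mul_one, sub_self, add_halves]
  have hnum : 0 ≤ 2 * min (dx / 2) (dx / 2) := by positivity
  split_ifs <;> simp only [abs_zero, add_zero, mul_one, mul_zero] at *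
  all_goals first
    | exact div_nonneg hnum (by positivity)
    | exact div_nonneg (by linarith) (by positivity)
    | (exfalso; linarith [abs_nonneg t])
    | (rename_i hedge; rw [hedge.2]; field_simp; linarith)

lemma wrd_pi_div_two_sub (dx φ t : ℝ) : wrd dx (π / 2 - φ) t = wrd dx φ t := by
  have hspecial : (∃ k : ℤ, π / 2 - φ = k * (π / 2)) ↔ ∃ k : ℤ, φ = k * (π / 2) :=
    ⟨fun ⟨k, hk⟩ => ⟨1 - k, by push_cast; linarith⟩,
      fun ⟨k, hk⟩ => ⟨1 - k, by push_cast; linarith⟩⟩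
  rw [wrd, wrd, kap, kap, sund, sund, sbar, sbar, cos_pi_div_two_sub, sin_pi_div_two_sub, hspecial,
    min_comm (1 / |sin φ|), add_comm |sin φ|, abs_sub_comm |sin φ|, mul_comm (sin φ)]
lemma sum_range_wrd_le {dx φ : ℝ} (hdx : 0 < dx) (hφ : |sin φ| ≤ |cos φ|) (t₀ : ℝ) (N : ℕ) :
    ∑ i ∈ Finset.range N, wrd dx φ (t₀ + i * (dx * cos φ)) ≤ 1 / (dx * |cos φ|) := by
  have hstep : |dx * cos φ| / 2 = dx * |cos φ| / 2 := by rw [abs_mul, abs_of_pos hdx]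
  by_cases hs : sin φ = 0
  · have hcos : |cos φ| = 1 := by
      rcases Real.sin_eq_zero_iff_cos_eq.mp hs with h | h <;> simp [h]
    calc ∑ i ∈ Finset.range N, wrd dx φ (t₀ + i * (dx * cos φ))
        ≤ 2 * (dx / 2) / dx ^ 2 :=
          sum_range_le_of_le_boxOverlap (by positivity) (by positivity)
            (fun t => by rw [hstep, hcos, mul_one]; exact wrd_le_boxOverlap_of_sin_eq_zero hdx hs t)
            t₀ N
      _ = 1 / (dx * |cos φ|) := by rw [hcos]; field_simp
  · have hsin : 0 < |sin φ| := abs_pos.mpr hs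
    have hcos : 0 < |cos φ| := hsin.trans_le hφ
    have hcs : cos φ * sin φ ≠ 0 :=
      mul_ne_zero (abs_pos.mp hcos) hs
    calc ∑ i ∈ Finset.range N, wrd dx φ (t₀ + i * (dx * cos φ))
        ≤ 2 * (dx * |sin φ| / 2) / (dx ^ 2 * |cos φ| * |sin φ|) :=
          sum_range_le_of_le_boxOverlap (by positivity) (by positivity)
            (fun t => by rw [hstep, wrd_eq_boxOverlap hdx hcs t]) t₀ N
      _ = 1 / (dx * |cos φ|) := by field_simp

lemma sum_range_wrd_le_of_abs_cos_le {dx φ : ℝ} (hdx : 0 < dx) (hφ : |cos φ| ≤ |sin φ|)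
    (t₀ : ℝ) (N : ℕ) :
    ∑ i ∈ Finset.range N, wrd dx φ (t₀ + i * (dx * sin φ)) ≤ 1 / (dx * |sin φ|) := by
  simpa only [wrd_pi_div_two_sub, cos_pi_div_two_sub, sin_pi_div_two_sub] using
    sum_range_wrd_le (φ := π / 2 - φ) hdx
      (by rwa [cos_pi_div_two_sub, sin_pi_div_two_sub]) t₀ N

end RayWeight

namespace Disc

variable (D : Disc)

lemma dx_pos : 0 < D.dx := div_pos two_pos (Nat.cast_pos.mpr D.Nx_pos)

lemma off_eq (i j q p : ℕ) :
    D.off i j q p = D.off 0 0 q p + i * (D.dx * cos (D.ang q)) + j * (D.dx * sin (D.ang q)) := by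
  simp only [off, xc]
  push_cast
  ring

lemma Nx_mul_one_div_le {a b : ℝ} (hab : |b| ≤ |a|) (hsq : a ^ 2 + b ^ 2 = 1) :
    D.Nx * (1 / (D.dx * |a|)) ≤ √8 / D.dx ^ 2 := by
  have h2a : 1 ≤ 2 * |a| ^ 2 := by nlinarith [sq_abs a, sq_abs b, abs_nonneg b]
  have ha : 0 < |a| := abs_pos.mpr (by rintro rfl; norm_num at h2a)
  have hN : (D.Nx : ℝ) ≠ 0 := Nat.cast_ne_zero.mpr D.Nx_pos.ne'
  calc D.Nx * (1 / (D.dx * |a|)) = 2 / |a| / D.dx ^ 2 := by rw [dx]; field_simp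
    _ ≤ √8 / D.dx ^ 2 := by
      gcongr
      rw [Real.le_sqrt' (by positivity), div_pow, div_le_iff₀ (by positivity)]
      linarith

end Disc

open RayWeight in
theorem rayWeight_space_sum_general (D : Disc) (qh ph : ℕ) :
    ∑ i ∈ Finset.range D.Nx, ∑ j ∈ Finset.range D.Nx,
        wrd D.dx (D.ang qh) (D.off i j qh ph)
      ≤ Real.sqrt 8 / D.dx ^ 2 := by
  set φ := D.ang qh
  rcases le_total |sin φ| |cos φ| with h | h
  · rw [Finset.sum_comm]
    calc _ ≤ ∑ _j ∈ Finset.range D.Nx, 1 / (D.dx * |cos φ|) :=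
          Finset.sum_le_sum fun j _ =>
            (Finset.sum_congr rfl fun i _ => by rw [D.off_eq i j, add_right_comm]).trans_le
              (sum_range_wrd_le D.dx_pos h (D.off 0 0 qh ph + j * (D.dx * sin φ)) D.Nx)
      _ ≤ _ := by
          rw [Finset.sum_const, Finset.card_range, nsmul_eq_mul]
          exact D.Nx_mul_one_div_le h (cos_sq_add_sin_sq φ)
  · calc _ ≤ ∑ _i ∈ Finset.range D.Nx, 1 / (D.dx * |sin φ|) :=
          Finset.sum_le_sum fun i _ =>
            (Finset.sum_congr rfl fun j _ => by rw [D.off_eq i j]).trans_le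
              (sum_range_wrd_le_of_abs_cos_le D.dx_pos h
                (D.off 0 0 qh ph + i * (D.dx * cos φ)) D.Nx)
      _ ≤ _ := by
          rw [Finset.sum_const, Finset.card_range, nsmul_eq_mul]
          exact D.Nx_mul_one_div_le h (sin_sq_add_cos_sq φ)

/-- the sum of ray-driven weights over all spatial pixels is at most `√8/δ_x²`. -/
theorem rayWeight_space_sum (D : Disc) (qh ph : ℕ) (hq : qh < D.Nphi) (hp : ph < D.Ns) :
    ∑ i ∈ Finset.range D.Nx, ∑ j ∈ Finset.range D.Nx,
        wrd D.dx (D.ang qh) (D.off i j qh ph)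
      ≤ Real.sqrt 8 / D.dx ^ 2 :=
  rayWeight_space_sum_general D qh ph
end
end

section
/- Let f : ℝ² → ℝ be smooth with compact support contained in Ω := B(0,1), and fix a discretization. For every q ∈ {0,…,N_φ−1}, p ∈ {0,…,N_s−1} and every (φ,s) ∈ Φ_q × S_p: |[Rf](φ,s) − [Rf](φ_q, s_p)| ≤ 4·‖∇f‖_{L^∞}·(δ_s + δ_φ), where [Rf](φ,s) := ∫_ℝ f(s·θ_φ + t·θ_φ^⊥) dt is evaluated pointwise. -/
open MeasureTheory Real Set Filter
open scoped BigOperators ENNReal Topology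

noncomputable section

/-- Cauchy-Schwarz in 2D. -/
lemma my_cauchy2 (a b c d : ℝ) : |a*c + b*d| ≤ Real.sqrt (a^2+b^2) * Real.sqrt (c^2+d^2) := by
  rw [← Real.sqrt_mul (by positivity), ← Real.sqrt_sq_eq_abs]
  apply Real.sqrt_le_sqrt
  nlinarith [sq_nonneg (a*d - b*c)]

/-- Euclidean Lipschitz bound via complex modulus. -/
lemma my_lip (f : ℝ × ℝ → ℝ) (hf : ContDiff ℝ (⊤ : ℕ∞) f) (M : ℝ)
    (hM : ∀ x : ℝ × ℝ, Real.sqrt (fderiv ℝ f x (1, 0) ^ 2 + fderiv ℝ f x (0, 1) ^ 2) ≤ M)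
    (c d : ℂ) :
    |f (c.re, c.im) - f (d.re, d.im)| ≤ M * ‖c - d‖ := by
  set L : ℂ →L[ℝ] ℝ × ℝ := (Complex.equivRealProdCLM : ℂ ≃L[ℝ] ℝ × ℝ).toContinuousLinearMap with hL
  have hLapp : ∀ z : ℂ, L z = (z.re, z.im) := fun z => rfl
  have hdiff : ∀ z : ℂ, DifferentiableAt ℝ (f ∘ L) z := fun z =>
    ((hf.differentiable (by simp)) (L z)).comp z L.differentiableAt
  have hfd : ∀ z : ℂ, fderiv ℝ (f ∘ L) z = (fderiv ℝ f (L z)).comp L := by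
    intro z
    rw [fderiv_comp z ((hf.differentiable (by simp)) (L z)) L.differentiableAt, L.fderiv]
  have hM0 : 0 ≤ M := (Real.sqrt_nonneg _).trans (hM 0)
  have hbound : ∀ z : ℂ, ‖fderiv ℝ (f ∘ L) z‖ ≤ M := by
    intro z
    rw [hfd z]
    apply ContinuousLinearMap.opNorm_le_bound _ hM0
    intro v
    have hv : L v = v.re • ((1:ℝ), (0:ℝ)) + v.im • ((0:ℝ), (1:ℝ)) := by
      rw [hLapp]; simp [Prod.ext_iff]
    rw [ContinuousLinearMap.comp_apply, hv, map_add, _root_.map_smul, _root_.map_smul]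
    simp only [smul_eq_mul, Real.norm_eq_abs]
    have h1 := my_cauchy2 v.re v.im (fderiv ℝ f (L z) (1,0)) (fderiv ℝ f (L z) (0,1))
    have h2 : Real.sqrt (v.re^2 + v.im^2) ≤ ‖v‖ := by
      rw [Complex.norm_def, Complex.normSq_apply]
      apply Real.sqrt_le_sqrt; ring_nf; exact le_refl _
    calc |v.re * fderiv ℝ f (L z) (1,0) + v.im * fderiv ℝ f (L z) (0,1)|
        ≤ Real.sqrt (v.re^2 + v.im^2) *
          Real.sqrt ((fderiv ℝ f (L z) (1,0))^2 + (fderiv ℝ f (L z) (0,1))^2) := h1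
      _ ≤ ‖v‖ * M := mul_le_mul h2 (hM (L z)) (Real.sqrt_nonneg _) (norm_nonneg _)
      _ = M * ‖v‖ := mul_comm _ _
  have := convex_univ.norm_image_sub_le_of_norm_fderiv_le
    (fun x _ => hdiff x) (fun x _ => hbound x) (Set.mem_univ d) (Set.mem_univ c)
  simpa [Function.comp, hLapp, Real.norm_eq_abs] using this

/-- The circle map is 1-Lipschitz. -/
lemma my_exp_lip (a b : ℝ) :
    ‖Complex.exp (a*Complex.I) - Complex.exp (b*Complex.I)‖ ≤ |a - b| := by
  have hd : ∀ x : ℝ, HasDerivAt (fun θ : ℝ => Complex.exp (θ*Complex.I))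
      (Complex.exp (x*Complex.I) * Complex.I) x := by
    intro x
    have h1 : HasDerivAt (fun w : ℂ => Complex.exp (w*Complex.I))
        (Complex.exp ((x:ℂ)*Complex.I) * Complex.I) (x:ℂ) := by
      have h2 : HasDerivAt (fun w : ℂ => w * Complex.I) Complex.I (x:ℂ) := by
        simpa using (hasDerivAt_id (x:ℂ)).mul_const Complex.I
      exact (Complex.hasDerivAt_exp ((x:ℂ)*Complex.I)).comp (x:ℂ) h2
    exact h1.comp_ofReal
  have := convex_univ.norm_image_sub_le_of_norm_hasDerivWithin_le
    (f := fun θ : ℝ => Complex.exp (θ*Complex.I))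
    (f' := fun x : ℝ => Complex.exp (x*Complex.I) * Complex.I)
    (fun x _ => (hd x).hasDerivWithinAt)
    (fun x _ => by
      rw [norm_mul, Complex.norm_exp_ofReal_mul_I,
        Complex.norm_I, one_mul])
    (Set.mem_univ b) (Set.mem_univ a)
  simpa [Real.norm_eq_abs] using this

set_option maxHeartbeats 2000000 in
/-- pointwise continuity estimate of the Radon transform of a smooth,
compactly supported function over a sinogram pixel. -/
theorem radon_pixelwise_estimate (f : ℝ × ℝ → ℝ) (hf : ContDiff ℝ (⊤ : ℕ∞) f)
    (hcs : HasCompactSupport f) (hΩ : tsupport f ⊆ Omg) (D : Disc) (M : ℝ)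
    (hM : ∀ x : ℝ × ℝ, Real.sqrt (fderiv ℝ f x (1, 0) ^ 2 + fderiv ℝ f x (0, 1) ^ 2) ≤ M)
    (q p : ℕ) (hq : q < D.Nphi) (hp : p < D.Ns) (φ s : ℝ)
    (hmem : (φ, s) ∈ D.Phipix q ×ˢ D.Spix p) :
    |Radon f φ s - Radon f (D.ang q) (D.sc p)| ≤ 4 * M * (D.ds + D.dphi) := by
  classical
  have hM0 : 0 ≤ M := (Real.sqrt_nonneg _).trans (hM 0)
  have hNs : (0:ℝ) < D.Ns := by exact_mod_cast D.Ns_pos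
  have hds0 : 0 < D.ds := by rw [Disc.ds]; positivity
  have hφ : φ ∈ D.Phipix q := hmem.1
  have hs : s ∈ D.Spix p := hmem.2
  have hs1 : |s - D.sc p| ≤ D.ds / 2 := by
    rw [Disc.Spix, Set.mem_Ico] at hs
    rw [abs_le]; constructor <;> linarith [hs.1, hs.2]
  have hsp : |D.sc p| ≤ 1 := by
    have hp' : (p:ℝ) + 1 ≤ D.Ns := by exact_mod_cast Nat.succ_le_of_lt hp
    rw [Disc.sc, Disc.ds, abs_le]
    constructor
    · have : (0:ℝ) < ((p:ℝ) + 1/2) * (2 / D.Ns) := by positivity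
      linarith
    · have : ((p:ℝ) + 1/2) * (2 / D.Ns) ≤ 2 := by
        rw [mul_div_assoc', div_le_iff₀ hNs]; nlinarith
      linarith
  have hlow : D.philow q ≤ D.ang q := by
    rw [Disc.philow]
    by_cases h0 : q = 0
    · simp only [h0, if_true]; exact (h0 ▸ (D.ang_mem q hq).1)
    · simp only [h0, if_false]
      have := D.ang_mono (q-1) q (Nat.sub_lt (Nat.pos_of_ne_zero h0) one_pos) hq
      linarith
  have hhigh : D.ang q ≤ D.phihigh q := by
    rw [Disc.phihigh]
    by_cases h1 : q = D.Nphi - 1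
    · simp only [h1, if_true]; exact (h1 ▸ (D.ang_mem q hq).2.le)
    · simp only [h1, if_false]
      have hq1 : q + 1 < D.Nphi := by omega
      have := D.ang_mono q (q+1) (Nat.lt_succ_self q) hq1
      linarith
  have hφq : |φ - D.ang q| ≤ D.dphi := by
    have hφ' := hφ
    rw [Disc.Phipix, Set.mem_Ico] at hφ'
    have hle : D.phihigh q - D.philow q ≤ D.dphi := by
      rw [Disc.dphi]
      exact Finset.le_sup' (fun r => D.phihigh r - D.philow r) (Finset.mem_range.mpr hq)
    rw [abs_le]; constructor <;> linarith [hφ'.1, hφ'.2]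
  have hdphi0 : 0 ≤ D.dphi := (abs_nonneg _).trans hφq
  -- the two integrands
  set g1 : ℝ → ℝ := fun t => f (s * cos φ - t * sin φ, s * sin φ + t * cos φ) with hg1
  set g2 : ℝ → ℝ := fun t =>
    f (D.sc p * cos (D.ang q) - t * sin (D.ang q),
       D.sc p * sin (D.ang q) + t * cos (D.ang q)) with hg2
  have hsupp : ∀ (a t θ : ℝ), f (a * cos θ - t * sin θ, a * sin θ + t * cos θ) ≠ 0 → |t| ≤ 1 := by
    intro a t θ hne
    have hm : (a * cos θ - t * sin θ, a * sin θ + t * cos θ) ∈ Omg :=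
      hΩ (subset_tsupport f (Function.mem_support.mpr hne))
    rw [Omg, Set.mem_setOf_eq] at hm
    have hm2 : (a * cos θ - t * sin θ)^2 + (a * sin θ + t * cos θ)^2 < 1 := hm
    have hpy := sin_sq_add_cos_sq θ
    have hkey : (a * cos θ - t * sin θ)^2 + (a * sin θ + t * cos θ)^2 = a^2 + t^2 := by
      linear_combination (a^2 + t^2) * hpy
    have ht2 : t^2 < 1 := by nlinarith [sq_nonneg a]
    rw [abs_le]; constructor <;> nlinarith [sq_nonneg (t+1), sq_nonneg (t-1)]
  have hcont1 : Continuous g1 := hf.continuous.comp (by fun_prop)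
  have hcont2 : Continuous g2 := hf.continuous.comp (by fun_prop)
  have hcs1 : HasCompactSupport g1 :=
    HasCompactSupport.intro isCompact_Icc (fun t ht => by
      by_contra hne
      exact ht (Set.mem_Icc.mpr (abs_le.mp (hsupp s t φ hne))))
  have hcs2 : HasCompactSupport g2 :=
    HasCompactSupport.intro isCompact_Icc (fun t ht => by
      by_contra hne
      exact ht (Set.mem_Icc.mpr (abs_le.mp (hsupp (D.sc p) t (D.ang q) hne))))
  have hint1 : Integrable g1 := hcont1.integrable_of_hasCompactSupport hcs1
  have hint2 : Integrable g2 := hcont2.integrable_of_hasCompactSupport hcs2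
  have hzero : ∀ t, t ∉ Icc (-1:ℝ) 1 → g1 t - g2 t = 0 := by
    intro t ht
    have h1 : g1 t = 0 := by
      by_contra hne; exact ht (Set.mem_Icc.mpr (abs_le.mp (hsupp s t φ hne)))
    have h2 : g2 t = 0 := by
      by_contra hne; exact ht (Set.mem_Icc.mpr (abs_le.mp (hsupp (D.sc p) t (D.ang q) hne)))
    rw [h1, h2, sub_zero]
  have key : Radon f φ s - Radon f (D.ang q) (D.sc p) = ∫ t in Icc (-1:ℝ) 1, (g1 t - g2 t) := by
    have e1 : Radon f φ s = ∫ t, g1 t := rfl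
    have e2 : Radon f (D.ang q) (D.sc p) = ∫ t, g2 t := rfl
    rw [e1, e2, setIntegral_eq_integral_of_forall_compl_eq_zero hzero,
      integral_sub hint1 hint2]
  have hpoint : ∀ t ∈ Icc (-1:ℝ) 1, ‖g1 t - g2 t‖ ≤ M * (D.ds/2 + 2 * D.dphi) := by
    intro t ht
    rw [Set.mem_Icc] at ht
    set z1 : ℂ := ((s:ℂ) + t*Complex.I) * Complex.exp (φ*Complex.I) with hz1
    set z2 : ℂ := ((D.sc p:ℂ) + t*Complex.I) * Complex.exp ((D.ang q:ℝ)*Complex.I) with hz2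
    have hre1 : z1.re = s * cos φ - t * sin φ := by
      rw [hz1]
      simp [Complex.exp_mul_I, Complex.mul_re, Complex.mul_im,
        Complex.cos_ofReal_re, Complex.sin_ofReal_re]
    have him1 : z1.im = s * sin φ + t * cos φ := by
      rw [hz1]
      simp [Complex.exp_mul_I, Complex.mul_re, Complex.mul_im,
        Complex.cos_ofReal_re, Complex.sin_ofReal_re] <;> ring
    have hre2 : z2.re = D.sc p * cos (D.ang q) - t * sin (D.ang q) := by
      rw [hz2]
      simp [Complex.exp_mul_I, Complex.mul_re, Complex.mul_im,
        Complex.cos_ofReal_re, Complex.sin_ofReal_re]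
    have him2 : z2.im = D.sc p * sin (D.ang q) + t * cos (D.ang q) := by
      rw [hz2]
      simp [Complex.exp_mul_I, Complex.mul_re, Complex.mul_im,
        Complex.cos_ofReal_re, Complex.sin_ofReal_re] <;> ring
    have hg1F : g1 t = f (z1.re, z1.im) := by rw [hre1, him1]
    have hg2F : g2 t = f (z2.re, z2.im) := by rw [hre2, him2]
    have hb : |g1 t - g2 t| ≤ M * ‖z1 - z2‖ := by
      rw [hg1F, hg2F]; exact my_lip f hf M hM z1 z2
    have hsplit : z1 - z2 = ((s:ℂ) - (D.sc p:ℂ)) * Complex.exp (φ*Complex.I)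
        + ((D.sc p:ℂ) + t*Complex.I) *
          (Complex.exp (φ*Complex.I) - Complex.exp ((D.ang q:ℝ)*Complex.I)) := by
      rw [hz1, hz2]; ring
    have habs2 : ‖(D.sc p:ℂ) + t*Complex.I‖ ≤ 2 := by
      have h1 : (‖(D.sc p:ℂ) + t*Complex.I‖)^2 = (D.sc p)^2 + t^2 := by
        rw [Complex.sq_norm, Complex.normSq_apply]; simp; ring
      have h2 := norm_nonneg ((D.sc p:ℂ) + t*Complex.I)
      nlinarith [abs_le.mp hsp, ht.1, ht.2,
        sq_nonneg (‖(D.sc p:ℂ) + t*Complex.I‖ - 2)]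
    have habs : ‖z1 - z2‖ ≤ D.ds/2 + 2 * D.dphi := by
      rw [hsplit]
      calc ‖((s:ℂ) - (D.sc p:ℂ)) * Complex.exp (φ*Complex.I)
            + ((D.sc p:ℂ) + t*Complex.I) *
              (Complex.exp (φ*Complex.I) - Complex.exp ((D.ang q:ℝ)*Complex.I))‖
          ≤ ‖((s:ℂ) - (D.sc p:ℂ)) * Complex.exp (φ*Complex.I)‖
            + ‖((D.sc p:ℂ) + t*Complex.I) *
              (Complex.exp (φ*Complex.I) - Complex.exp ((D.ang q:ℝ)*Complex.I))‖ :=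
            norm_add_le _ _
        _ = |s - D.sc p| + ‖(D.sc p:ℂ) + t*Complex.I‖ *
              ‖Complex.exp (φ*Complex.I) - Complex.exp ((D.ang q:ℝ)*Complex.I)‖ := by
            rw [norm_mul, norm_mul, Complex.norm_exp_ofReal_mul_I, mul_one]
            congr 1
            rw [← Complex.ofReal_sub, Complex.norm_real, Real.norm_eq_abs]
        _ ≤ D.ds/2 + 2 * D.dphi := by
            apply add_le_add hs1
            exact mul_le_mul habs2 ((my_exp_lip φ (D.ang q)).trans hφq)
              (norm_nonneg _) (by norm_num)
    calc ‖g1 t - g2 t‖ = |g1 t - g2 t| := Real.norm_eq_abs _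
      _ ≤ M * ‖z1 - z2‖ := hb
      _ ≤ M * (D.ds/2 + 2 * D.dphi) := mul_le_mul_of_nonneg_left habs hM0
  have hvol : volume (Icc (-1:ℝ) 1) < ⊤ := by
    rw [Real.volume_Icc]; exact ENNReal.ofReal_lt_top
  have hbound := norm_setIntegral_le_of_norm_le_const hvol hpoint
  rw [← Real.norm_eq_abs, key]
  calc ‖∫ t in Icc (-1:ℝ) 1, (g1 t - g2 t)‖
      ≤ (M * (D.ds/2 + 2 * D.dphi)) * (volume (Icc (-1:ℝ) 1)).toReal := hbound
    _ = (M * (D.ds/2 + 2 * D.dphi)) * 2 := by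
        rw [Real.volume_Icc]
        norm_num
    _ ≤ 4 * M * (D.ds + D.dphi) := by nlinarith [hds0.le]
end
end

section
/- Let 0 < c₀ < 1 and let g : [0,π]×[−1,1] → ℝ be smooth with g(φ,s) = 0 whenever |s| ≥ c₀. Fix a discretization satisfying 1 − δ_s/2 − δ_x/√2 − δ_φ > c₀. Then for every x ∈ Ω lying in the interior of some pixel X_{ij}: |[R* g](x) − [R_δ^{pd,*} g](x)| ≤ (3/2)·π·(δ_s + δ_x + δ_φ)·‖∂g/∂s‖_{L^∞}, where [R*g](x) := ∫_0^π g(φ, x·θ_φ) dφ. -/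
open MeasureTheory Real Set Filter
open scoped BigOperators ENNReal Topology

noncomputable section

/- ===== auxiliary lemmas ===== -/

lemma neg_le_sin' (x : ℝ) (h : 0 ≤ x) : -x ≤ Real.sin x := by
  rcases le_or_gt x 1 with h1 | h1
  · have := Real.sin_nonneg_of_nonneg_of_le_pi h (h1.trans (by nlinarith [Real.pi_gt_three]))
    linarith
  · linarith [Real.neg_one_le_sin x]

lemma abs_sin_le' (x : ℝ) : |Real.sin x| ≤ |x| := by
  rcases le_or_gt 0 x with h | h
  · rw [abs_of_nonneg h]; exact abs_le.2 ⟨neg_le_sin' x h, Real.sin_le h⟩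
  · rw [abs_of_neg h]
    have : |Real.sin (-x)| ≤ -x :=
      abs_le.2 ⟨by simpa using neg_le_sin' (-x) (by linarith), Real.sin_le (by linarith)⟩
    simpa [Real.sin_neg, abs_neg] using this

lemma dot_theta_diff (x1 x2 φ ψ : ℝ) (hx : x1 ^ 2 + x2 ^ 2 ≤ 1) :
    |(x1 * Real.cos φ + x2 * Real.sin φ) - (x1 * Real.cos ψ + x2 * Real.sin ψ)| ≤ |φ - ψ| := by
  have hc := Real.cos_sub_cos φ ψ
  have hs := Real.sin_sub_sin φ ψ
  set h := (φ - ψ) / 2 with hh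
  have hsin : |Real.sin h| ≤ |h| := abs_sin_le' h
  have key : (x1 * Real.cos φ + x2 * Real.sin φ) - (x1 * Real.cos ψ + x2 * Real.sin ψ)
      = Real.sin h * (2 * (-(x1 * Real.sin ((φ + ψ)/2)) + x2 * Real.cos ((φ + ψ)/2))) := by
    rw [show x1 * Real.cos φ + x2 * Real.sin φ - (x1 * Real.cos ψ + x2 * Real.sin ψ)
        = x1 * (Real.cos φ - Real.cos ψ) + x2 * (Real.sin φ - Real.sin ψ) by ring, hc, hs]
    ring
  rw [key, abs_mul]
  have hb : |2 * (-(x1 * Real.sin ((φ + ψ)/2)) + x2 * Real.cos ((φ + ψ)/2))| ≤ 2 := by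
    rw [abs_mul, abs_two]
    have h1 : (-(x1 * Real.sin ((φ + ψ)/2)) + x2 * Real.cos ((φ + ψ)/2)) ^ 2 ≤ 1 := by
      have := Real.sin_sq_add_cos_sq ((φ + ψ)/2)
      nlinarith [sq_nonneg (x1 * Real.cos ((φ+ψ)/2) + x2 * Real.sin ((φ+ψ)/2))]
    nlinarith [abs_nonneg (-(x1 * Real.sin ((φ + ψ)/2)) + x2 * Real.cos ((φ + ψ)/2)),
      sq_abs (-(x1 * Real.sin ((φ + ψ)/2)) + x2 * Real.cos ((φ + ψ)/2))]
  calc |Real.sin h| * |2 * (-(x1 * Real.sin ((φ + ψ)/2)) + x2 * Real.cos ((φ + ψ)/2))|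
      ≤ |h| * 2 := mul_le_mul hsin hb (abs_nonneg _) (abs_nonneg _)
    _ = |φ - ψ| := by rw [hh, abs_div]; simp [abs_two]

lemma dot_bound (a b θ r : ℝ) (hr : 0 ≤ r) (ha : |a| ≤ r) (hb : |b| ≤ r) :
    |a * Real.cos θ + b * Real.sin θ| ≤ r * Real.sqrt 2 := by
  have hs := Real.sin_sq_add_cos_sq θ
  have hsq : (a * Real.cos θ + b * Real.sin θ) ^ 2 ≤ 2 * r ^ 2 := by
    nlinarith [sq_abs a, sq_abs b, sq_nonneg (a * Real.sin θ - b * Real.cos θ),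
      abs_nonneg a, abs_nonneg b]
  calc |a * Real.cos θ + b * Real.sin θ|
      = Real.sqrt ((a * Real.cos θ + b * Real.sin θ) ^ 2) := (Real.sqrt_sq_eq_abs _).symm
    _ ≤ Real.sqrt (2 * r ^ 2) := Real.sqrt_le_sqrt hsq
    _ = r * Real.sqrt 2 := by
        rw [Real.sqrt_mul (by norm_num : (0:ℝ) ≤ 2), Real.sqrt_sq hr]; ring

lemma lip_in_s (g : ℝ × ℝ → ℝ) (hg : ContDiff ℝ (⊤ : ℕ∞) g) (M : ℝ)
    (hM : ∀ y : ℝ × ℝ, |fderiv ℝ g y (0, 1)| ≤ M) (φ s s' : ℝ) :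
    |g (φ, s) - g (φ, s')| ≤ M * |s - s'| := by
  have hd : ∀ t : ℝ, HasDerivAt (fun t => g (φ, t)) (fderiv ℝ g (φ, t) (0, 1)) t := by
    intro t
    have hL : HasDerivAt (fun t : ℝ => ((φ, t) : ℝ × ℝ)) (0, 1) t :=
      HasDerivAt.prodMk (hasDerivAt_const t φ) (hasDerivAt_id t)
    exact ((hg.differentiable (by simp) (φ, t)).hasFDerivAt).comp_hasDerivAt t hL
  have := Convex.norm_image_sub_le_of_norm_hasDerivWithin_le
    (f := fun t => g (φ, t)) (f' := fun t => fderiv ℝ g (φ, t) (0, 1)) (s := Set.univ)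
    (fun t _ => (hd t).hasDerivWithinAt) (fun t _ => by simpa [Real.norm_eq_abs] using hM (φ, t))
    convex_univ (Set.mem_univ s') (Set.mem_univ s)
  simpa [Real.norm_eq_abs] using this

section hat
variable (δ s0 t : ℝ)

private lemma hat_le (hδ : 0 < δ) (p : ℕ) : max (δ - |t - (s0 + p * δ)|) 0 ≤ δ :=
  max_le (by linarith [abs_nonneg (t - (s0 + p * δ))]) hδ.le

private lemma hat_mem (hδ : 0 < δ) (p : ℕ) (h : max (δ - |t - (s0 + p * δ)|) 0 ≠ 0) :
    (p : ℤ) = ⌊(t - s0) / δ⌋ ∨ (p : ℤ) = ⌊(t - s0) / δ⌋ + 1 := by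
  have habs : |t - (s0 + p * δ)| < δ := by
    by_contra hc
    push_neg at hc
    exact h (max_eq_right (by linarith))
  rw [abs_lt] at habs
  have h1 : ((p : ℝ) - 1) ≤ (t - s0) / δ := by
    rw [le_div_iff₀ hδ]; nlinarith
  have h2 : (t - s0) / δ < (p : ℝ) + 1 := by
    rw [div_lt_iff₀ hδ]; nlinarith
  have hf1 : ((p : ℤ) - 1) ≤ ⌊(t - s0) / δ⌋ := Int.le_floor.2 (by push_cast; exact h1)
  have hf2 : ⌊(t - s0) / δ⌋ < (p : ℤ) + 1 := Int.floor_lt.2 (by push_cast; exact h2)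
  omega

private lemma hat_sum_le (hδ : 0 < δ) (N : ℕ) :
    ∑ p ∈ Finset.range N, max (δ - |t - (s0 + p * δ)|) 0 ≤ δ := by
  classical
  set f : ℕ → ℝ := fun p => max (δ - |t - (s0 + p * δ)|) 0 with hf
  set k : ℤ := ⌊(t - s0) / δ⌋ with hk
  have hfnn : ∀ p : ℕ, 0 ≤ f p := fun p => le_max_right _ _
  have hu0 : 0 ≤ t - s0 - k * δ := by
    have := Int.floor_le ((t - s0) / δ)
    rw [hk]
    nlinarith [this, (le_div_iff₀ hδ).mp this]
  have huδ : t - s0 - k * δ < δ := by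
    have := Int.lt_floor_add_one ((t - s0) / δ)
    rw [hk]
    nlinarith [(div_lt_iff₀ hδ).mp this]
  set u : ℝ := t - s0 - k * δ with hu
  have hstep1 : ∑ p ∈ Finset.range N, f p
      = ∑ p ∈ (Finset.range N).filter (fun p : ℕ => (p : ℤ) = k ∨ (p : ℤ) = k + 1), f p :=
    (Finset.sum_filter_of_ne (fun p hp hne => hat_mem δ s0 t hδ p hne)).symm
  have hsub : (Finset.range N).filter (fun p : ℕ => (p : ℤ) = k ∨ (p : ℤ) = k + 1)
      ⊆ ({k.toNat, (k+1).toNat} : Finset ℕ) := by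
    intro p hp
    simp only [Finset.mem_filter] at hp
    simp only [Finset.mem_insert, Finset.mem_singleton]
    rcases hp.2 with h | h
    · left; omega
    · right; omega
  have hstep2 : ∑ p ∈ (Finset.range N).filter (fun p : ℕ => (p : ℤ) = k ∨ (p : ℤ) = k + 1), f p
      ≤ ∑ p ∈ ({k.toNat, (k+1).toNat} : Finset ℕ), f p :=
    Finset.sum_le_sum_of_subset_of_nonneg hsub (fun p _ _ => hfnn p)
  rw [hstep1]
  refine hstep2.trans ?_
  by_cases hknn : 0 ≤ k
  · have hne : k.toNat ≠ (k+1).toNat := by omega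
    rw [Finset.sum_pair hne]
    have hc1 : ((k.toNat : ℕ) : ℝ) = (k : ℝ) := by exact_mod_cast Int.toNat_of_nonneg hknn
    have hc2 : (((k+1).toNat : ℕ) : ℝ) = (k : ℝ) + 1 := by
      exact_mod_cast Int.toNat_of_nonneg (by omega : (0:ℤ) ≤ k + 1)
    have hv1 : f k.toNat = δ - u := by
      simp only [hf]
      rw [hc1, show t - (s0 + (k:ℝ) * δ) = u by rw [hu]; ring, abs_of_nonneg hu0]
      exact max_eq_left (by linarith)
    have hv2 : f (k+1).toNat = u := by
      simp only [hf]
      rw [hc2, show t - (s0 + ((k:ℝ) + 1) * δ) = u - δ by rw [hu]; ring,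
        abs_of_nonpos (by linarith), show δ - -(u - δ) = u by ring]
      exact max_eq_left hu0
    rw [hv1, hv2]; linarith
  · have heq : ({k.toNat, (k+1).toNat} : Finset ℕ) = {k.toNat} := by
      have : (k+1).toNat = k.toNat := by omega
      rw [this]; simp
    rw [heq, Finset.sum_singleton]
    exact hat_le δ s0 t hδ _

private lemma hat_sum_eq (hδ : 0 < δ) (N : ℕ) (hN : 0 < N)
    (h1 : s0 ≤ t) (h2 : t ≤ s0 + ((N : ℝ) - 1) * δ) :
    ∑ p ∈ Finset.range N, max (δ - |t - (s0 + p * δ)|) 0 = δ := by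
  classical
  set f : ℕ → ℝ := fun p => max (δ - |t - (s0 + p * δ)|) 0 with hf
  set k : ℤ := ⌊(t - s0) / δ⌋ with hk
  have hfnn : ∀ p : ℕ, 0 ≤ f p := fun p => le_max_right _ _
  have hknn : 0 ≤ k := by
    rw [hk]; exact Int.floor_nonneg.2 (div_nonneg (by linarith) hδ.le)
  have hklt : k < (N : ℤ) := by
    rw [hk]
    refine Int.floor_lt.2 ?_
    push_cast
    rw [div_lt_iff₀ hδ]
    have hN1 : (1:ℝ) ≤ (N:ℝ) := by exact_mod_cast hN
    nlinarith
  have hu0 : 0 ≤ t - s0 - k * δ := by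
    have := Int.floor_le ((t - s0) / δ)
    rw [hk]
    nlinarith [(le_div_iff₀ hδ).mp this]
  have huδ : t - s0 - k * δ < δ := by
    have := Int.lt_floor_add_one ((t - s0) / δ)
    rw [hk]
    nlinarith [(div_lt_iff₀ hδ).mp this]
  set u : ℝ := t - s0 - k * δ with hu
  have hc1 : ((k.toNat : ℕ) : ℝ) = (k : ℝ) := by exact_mod_cast Int.toNat_of_nonneg hknn
  have hc2 : (((k+1).toNat : ℕ) : ℝ) = (k : ℝ) + 1 := by
    exact_mod_cast Int.toNat_of_nonneg (by omega : (0:ℤ) ≤ k + 1)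
  have hv1 : f k.toNat = δ - u := by
    simp only [hf]
    rw [hc1, show t - (s0 + (k:ℝ) * δ) = u by rw [hu]; ring, abs_of_nonneg hu0]
    exact max_eq_left (by linarith)
  have hv2 : f (k+1).toNat = u := by
    simp only [hf]
    rw [hc2, show t - (s0 + ((k:ℝ) + 1) * δ) = u - δ by rw [hu]; ring,
      abs_of_nonpos (by linarith), show δ - -(u - δ) = u by ring]
    exact max_eq_left hu0
  by_cases hcase : k + 1 < (N : ℤ)
  · have hsub : ({k.toNat, (k+1).toNat} : Finset ℕ) ⊆ Finset.range N := by
      intro p hp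
      simp only [Finset.mem_insert, Finset.mem_singleton] at hp
      rcases hp with h | h <;> (rw [Finset.mem_range]; omega)
    have hzero : ∀ p ∈ Finset.range N, p ∉ ({k.toNat, (k+1).toNat} : Finset ℕ) → f p = 0 := by
      intro p hp hnp
      by_contra hne
      rcases hat_mem δ s0 t hδ p hne with h | h <;>
        (exact hnp (by simp only [Finset.mem_insert, Finset.mem_singleton]; omega))
    rw [← Finset.sum_subset hsub hzero, Finset.sum_pair (by omega : k.toNat ≠ (k+1).toNat),
      hv1, hv2]
    ring
  · -- k = N - 1, so u = 0
    have hkeq : k = (N : ℤ) - 1 := by omega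
    have hu_eq : u = 0 := by
      have : t - s0 ≤ ((N:ℝ) - 1) * δ := by linarith
      have hkr : (k : ℝ) = (N : ℝ) - 1 := by exact_mod_cast hkeq
      have : u ≤ 0 := by rw [hu, hkr]; linarith
      linarith
    have hsub : ({k.toNat} : Finset ℕ) ⊆ Finset.range N := by
      intro p hp
      simp only [Finset.mem_singleton] at hp
      rw [Finset.mem_range]; omega
    have hzero : ∀ p ∈ Finset.range N, p ∉ ({k.toNat} : Finset ℕ) → f p = 0 := by
      intro p hp hnp
      by_contra hne
      rcases hat_mem δ s0 t hδ p hne with h | h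
      · exact hnp (by simp only [Finset.mem_singleton]; omega)
      · rw [Finset.mem_range] at hp; omega
    rw [← Finset.sum_subset hsub hzero, Finset.sum_singleton, hv1, hu_eq]
    ring
end hat

set_option maxHeartbeats 2000000 in
/-- pointwise error bound for the pixel-driven backprojection of a smooth
sinogram supported away from the detector boundary. -/
theorem pixelBackproj_pointwise_error (c0 : ℝ) (hc0 : 0 < c0) (hc0' : c0 < 1)
    (g : ℝ × ℝ → ℝ) (hg : ContDiff ℝ (⊤ : ℕ∞) g) (hz : ∀ φ s : ℝ, c0 ≤ |s| → g (φ, s) = 0)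
    (D : Disc) (hδ : 1 - D.ds / 2 - D.dx / Real.sqrt 2 - D.dphi > c0)
    (M : ℝ) (hM : ∀ y : ℝ × ℝ, |fderiv ℝ g y (0, 1)| ≤ M)
    (x : ℝ × ℝ) (hx : x ∈ Omg) (i j : ℕ) (hi : i < D.Nx) (hj : j < D.Nx)
    (hxin : x ∈ interior (D.Xpix i j)) :
    |Backproj g x - D.discBackproj (fun _ t => wpd D.ds t) g x|
      ≤ 3 / 2 * π * (D.ds + D.dx + D.dphi) * M := by
  classical
  have hπ := Real.pi_pos
  have hNx : (0:ℝ) < D.Nx := by exact_mod_cast D.Nx_pos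
  have hNs : (0:ℝ) < D.Ns := by exact_mod_cast D.Ns_pos
  have hdx : 0 < D.dx := div_pos two_pos hNx
  have hds : 0 < D.ds := div_pos two_pos hNs
  have hM0 : 0 ≤ M := le_trans (abs_nonneg _) (hM 0)
  have hsqrt2 : (0:ℝ) < Real.sqrt 2 := Real.sqrt_pos.2 two_pos
  have hsqrt2' : (1:ℝ) ≤ Real.sqrt 2 := by
    rw [show (1:ℝ) = Real.sqrt 1 from (Real.sqrt_one).symm]
    exact Real.sqrt_le_sqrt (by norm_num)
  have hxO : x.1 ^ 2 + x.2 ^ 2 < 1 := hx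
  -- ===== angular pixel structure =====
  set L : ℕ → ℝ := fun n => if n = D.Nphi then π else D.philow n with hLdef
  have hL0 : L 0 = 0 := by
    have h1 : (0:ℕ) ≠ D.Nphi := by have := D.Nphi_pos; omega
    show (if 0 = D.Nphi then π else D.philow 0) = 0
    rw [if_neg h1, Disc.philow, if_pos rfl]
  have hLN : L D.Nphi = π := if_pos rfl
  have hLlow : ∀ q < D.Nphi, L q = D.philow q := fun q hq => if_neg (by omega)
  have hlow_le_ang : ∀ q < D.Nphi, D.philow q ≤ D.ang q := by
    intro q hq
    rcases Nat.eq_zero_or_pos q with h0 | h0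
    · subst h0; rw [Disc.philow, if_pos rfl]; exact (D.ang_mem 0 hq).1
    · rw [Disc.philow, if_neg h0.ne']
      have := D.ang_mono (q-1) q (by omega) hq
      linarith
  have hang_le_high : ∀ q < D.Nphi, D.ang q ≤ D.phihigh q := by
    intro q hq
    by_cases hq1 : q = D.Nphi - 1
    · rw [Disc.phihigh, if_pos hq1]; exact (D.ang_mem q hq).2.le
    · rw [Disc.phihigh, if_neg hq1]
      have := D.ang_mono q (q+1) (by omega) (by omega)
      linarith
  have hlow_nonneg : ∀ q < D.Nphi, 0 ≤ D.philow q := by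
    intro q hq
    rcases Nat.eq_zero_or_pos q with h0 | h0
    · subst h0; rw [Disc.philow, if_pos rfl]
    · rw [Disc.philow, if_neg h0.ne']
      have h1 := (D.ang_mem (q-1) (by omega)).1
      have h2 := (D.ang_mem q hq).1
      linarith
  have hhigh_le_pi : ∀ q < D.Nphi, D.phihigh q ≤ π := by
    intro q hq
    by_cases hq1 : q = D.Nphi - 1
    · rw [Disc.phihigh, if_pos hq1]
    · rw [Disc.phihigh, if_neg hq1]
      have h1 := (D.ang_mem q hq).2
      have h2 := (D.ang_mem (q+1) (by omega)).2
      linarith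
  have hlh : ∀ q < D.Nphi, D.philow q ≤ D.phihigh q :=
    fun q hq => (hlow_le_ang q hq).trans (hang_le_high q hq)
  have hLhigh : ∀ q < D.Nphi, D.phihigh q = L (q+1) := by
    intro q hq
    by_cases hq1 : q + 1 = D.Nphi
    · rw [hLdef]; simp only [if_pos hq1]
      rw [Disc.phihigh, if_pos (by omega)]
    · rw [hLdef]; simp only [if_neg hq1]
      rw [Disc.phihigh, if_neg (by omega), Disc.philow, if_neg (by omega), Nat.add_sub_cancel]
  have hdphi_le : ∀ q < D.Nphi, D.phihigh q - D.philow q ≤ D.dphi := by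
    intro q hq
    exact Finset.le_sup' (fun q => D.phihigh q - D.philow q) (Finset.mem_range.2 hq)
  have hdphi0 : 0 ≤ D.dphi :=
    le_trans (sub_nonneg.2 (hlh 0 D.Nphi_pos)) (hdphi_le 0 D.Nphi_pos)
  -- ===== geometry =====
  set σg : ℝ → ℝ := fun φ => x.1 * Real.cos φ + x.2 * Real.sin φ with hσdef
  set τ : ℕ → ℝ := fun q =>
    (D.xc i j).1 * Real.cos (D.ang q) + (D.xc i j).2 * Real.sin (D.ang q) with hτdef
  set G : ℝ → ℝ := fun φ => g (φ, σg φ) with hGdef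
  set H : ℕ → ℝ → ℝ := fun p φ => ∫ s in D.Spix p, g (φ, s) with hHdef
  set W : ℕ → ℕ → ℝ := fun q p => wpd D.ds (D.off i j q p) with hWdef
  set B : ℝ := D.dx / Real.sqrt 2 + D.dphi with hBdef
  have hB0 : 0 ≤ B := by positivity
  set C0 : ℝ := M * (3/2 * D.ds + B) with hC0def
  have hxin' := hxin
  rw [Disc.Xpix, interior_prod_eq, interior_Icc, interior_Icc] at hxin'
  have hx1 : |x.1 - (D.xc i j).1| ≤ D.dx / 2 := by
    have := hxin'.1
    rw [Set.mem_Ioo] at this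
    rw [abs_le]; constructor <;> linarith [this.1, this.2]
  have hx2 : |x.2 - (D.xc i j).2| ≤ D.dx / 2 := by
    have := hxin'.2
    rw [Set.mem_Ioo] at this
    rw [abs_le]; constructor <;> linarith [this.1, this.2]
  have hdx_sqrt : D.dx / 2 * Real.sqrt 2 = D.dx / Real.sqrt 2 := by
    rw [eq_div_iff hsqrt2.ne', mul_assoc, Real.mul_self_sqrt (by norm_num : (0:ℝ) ≤ 2)]
    ring
  have hτσ : ∀ q < D.Nphi, ∀ φ ∈ D.Phipix q, |τ q - σg φ| ≤ B := by
    intro q hq φ hφ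
    have h1 : |τ q - σg (D.ang q)| ≤ D.dx / Real.sqrt 2 := by
      rw [hτdef, hσdef]
      have : (D.xc i j).1 * Real.cos (D.ang q) + (D.xc i j).2 * Real.sin (D.ang q)
          - (x.1 * Real.cos (D.ang q) + x.2 * Real.sin (D.ang q))
          = ((D.xc i j).1 - x.1) * Real.cos (D.ang q)
            + ((D.xc i j).2 - x.2) * Real.sin (D.ang q) := by ring
      rw [this, ← hdx_sqrt]
      exact dot_bound _ _ _ _ (by linarith)
        (by rw [abs_sub_comm]; exact hx1) (by rw [abs_sub_comm]; exact hx2)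
    have hφq : |D.ang q - φ| ≤ D.dphi := by
      rw [Disc.Phipix, Set.mem_Ico] at hφ
      have h2 := hlow_le_ang q hq
      have h3 := hang_le_high q hq
      have h4 := hdphi_le q hq
      rw [abs_le]; constructor <;> linarith [hφ.1, hφ.2]
    have h2 : |σg (D.ang q) - σg φ| ≤ D.dphi := by
      refine le_trans (dot_theta_diff x.1 x.2 (D.ang q) φ hxO.le) ?_
      exact hφq
    calc |τ q - σg φ| ≤ |τ q - σg (D.ang q)| + |σg (D.ang q) - σg φ| := by
          have := abs_sub_le (τ q) (σg (D.ang q)) (σg φ); linarith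
      _ ≤ B := by rw [hBdef]; linarith
  -- ===== weight function facts =====
  have hsc : ∀ p : ℕ, D.sc p = (D.ds/2 - 1) + p * D.ds := by
    intro p; rw [Disc.sc]; ring
  have hoff : ∀ q p : ℕ, D.off i j q p = τ q - D.sc p := fun q p => rfl
  have hW_eq : ∀ q p : ℕ,
      W q p = (1/D.ds^2) * max (D.ds - |τ q - ((D.ds/2 - 1) + p * D.ds)|) 0 := by
    intro q p
    rw [hWdef]
    simp only [wpd]
    rw [hoff, hsc]
  have hW_nonneg : ∀ q p : ℕ, 0 ≤ W q p := by
    intro q p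
    rw [hW_eq]
    positivity
  have hW_ne : ∀ q p : ℕ, W q p ≠ 0 → |τ q - D.sc p| < D.ds := by
    intro q p hne
    by_contra hc
    push_neg at hc
    apply hne
    rw [hW_eq q p, ← hsc p, max_eq_right (by linarith), mul_zero]
  have hWsum_le : ∀ q : ℕ, (∑ p ∈ Finset.range D.Ns, W q p * D.ds) ≤ 1 := by
    intro q
    have : (∑ p ∈ Finset.range D.Ns, W q p * D.ds)
        = (1/D.ds) * ∑ p ∈ Finset.range D.Ns,
            max (D.ds - |τ q - ((D.ds/2 - 1) + p * D.ds)|) 0 := by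
      rw [Finset.mul_sum]
      refine Finset.sum_congr rfl fun p _ => ?_
      rw [hW_eq]
      field_simp
    rw [this]
    have h1 := hat_sum_le D.ds (D.ds/2 - 1) (τ q) hds D.Ns
    calc (1/D.ds) * ∑ p ∈ Finset.range D.Ns,
            max (D.ds - |τ q - ((D.ds/2 - 1) + p * D.ds)|) 0
        ≤ (1/D.ds) * D.ds := by
          apply mul_le_mul_of_nonneg_left h1 (by positivity)
      _ = 1 := by field_simp
  have hWsum_eq : ∀ q : ℕ, |τ q| ≤ 1 - D.ds/2 →
      (∑ p ∈ Finset.range D.Ns, W q p * D.ds) = 1 := by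
    intro q hτq
    have hNsds : (D.Ns : ℝ) * D.ds = 2 := by
      rw [Disc.ds]; field_simp
    rw [abs_le] at hτq
    have : (∑ p ∈ Finset.range D.Ns, W q p * D.ds)
        = (1/D.ds) * ∑ p ∈ Finset.range D.Ns,
            max (D.ds - |τ q - ((D.ds/2 - 1) + p * D.ds)|) 0 := by
      rw [Finset.mul_sum]
      refine Finset.sum_congr rfl fun p _ => ?_
      rw [hW_eq]
      field_simp
    rw [this, hat_sum_eq D.ds (D.ds/2 - 1) (τ q) hds D.Ns D.Ns_pos
      (by linarith [hτq.1]) (by nlinarith [hτq.2])]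
    field_simp
  -- ===== continuity / integrability =====
  have hgc : Continuous g := hg.continuous
  have hGcont : Continuous G := by
    rw [hGdef]
    exact hgc.comp (continuous_id.prodMk (by fun_prop))
  have hGint : ∀ a b : ℝ, IntegrableOn G (Ico a b) :=
    fun a b => (hGcont.integrableOn_Icc).mono_set Ico_subset_Icc_self
  have hGPhi : ∀ q : ℕ, IntegrableOn G (D.Phipix q) := fun q => hGint _ _
  have hgint : ∀ q p : ℕ, IntegrableOn g (D.Phipix q ×ˢ D.Spix p) := by
    intro q p
    refine ((hgc.continuousOn).integrableOn_compact
      ((isCompact_Icc (a := D.philow q) (b := D.phihigh q)).prod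
        (isCompact_Icc (a := D.sc p - D.ds/2) (b := D.sc p + D.ds/2)))).mono_set ?_
    exact Set.prod_mono Ico_subset_Icc_self Ico_subset_Icc_self
  have hfub : ∀ q p : ℕ, (∫ y in D.Phipix q ×ˢ D.Spix p, g y) = ∫ φ in D.Phipix q, H p φ := by
    intro q p
    have h1 : IntegrableOn g (D.Phipix q ×ˢ D.Spix p)
        ((volume : Measure ℝ).prod (volume : Measure ℝ)) := by
      rw [← MeasureTheory.Measure.volume_eq_prod]; exact hgint q p
    calc (∫ y in D.Phipix q ×ˢ D.Spix p, g y)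
        = ∫ y in D.Phipix q ×ˢ D.Spix p, g y ∂((volume : Measure ℝ).prod volume) := by
          rw [← MeasureTheory.Measure.volume_eq_prod]
      _ = ∫ φ in D.Phipix q, ∫ s in D.Spix p, g (φ, s) := MeasureTheory.setIntegral_prod g h1
  have hHint : ∀ q p : ℕ, IntegrableOn (H p) (D.Phipix q) := by
    intro q p
    have h1 : Integrable g (((volume : Measure ℝ).restrict (D.Phipix q)).prod
        ((volume : Measure ℝ).restrict (D.Spix p))) := by
      rw [MeasureTheory.Measure.prod_restrict, ← MeasureTheory.Measure.volume_eq_prod]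
      exact hgint q p
    have h2 := h1.integral_prod_left
    exact h2
  have hSumInt : ∀ q : ℕ,
      IntegrableOn (fun φ => ∑ p ∈ Finset.range D.Ns, W q p * H p φ) (D.Phipix q) :=
    fun q => integrable_finset_sum _ (fun p _ => (hHint q p).const_mul _)
  have hSpm : ∀ p : ℕ, volume (D.Spix p) = ENNReal.ofReal D.ds := by
    intro p
    rw [Disc.Spix, Real.volume_Ico]
    congr 1
    ring
  have hSpfin : ∀ p : ℕ, volume (D.Spix p) < ⊤ := fun p => by
    rw [hSpm]; exact ENNReal.ofReal_lt_top
  -- ===== pointwise detector-sum bound =====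
  have hHbound : ∀ q < D.Nphi, ∀ p : ℕ, ∀ φ ∈ D.Phipix q, W q p ≠ 0 →
      |H p φ - D.ds * G φ| ≤ (M * (3/2 * D.ds + B)) * D.ds := by
    intro q hq p φ hφ hWne
    have hτs := hτσ q hq φ hφ
    have hsp := hW_ne q p hWne
    have hint1 : IntegrableOn (fun s => g (φ, s)) (D.Spix p) :=
      ((hgc.comp (Continuous.prodMk_right φ)).integrableOn_Icc).mono_set Ico_subset_Icc_self
    have hconst : (∫ _ in D.Spix p, g (φ, σg φ)) = D.ds * G φ := by
      rw [setIntegral_const, measureReal_def, hSpm, ENNReal.toReal_ofReal hds.le, smul_eq_mul, hGdef]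
    have heq : H p φ - D.ds * G φ = ∫ s in D.Spix p, (g (φ, s) - g (φ, σg φ)) := by
      rw [integral_sub hint1 (integrableOn_const (hSpfin p).ne), hconst, hHdef]
    rw [heq]
    have hbnd : ∀ s ∈ D.Spix p, ‖g (φ, s) - g (φ, σg φ)‖ ≤ M * (3/2 * D.ds + B) := by
      intro s hs
      rw [Real.norm_eq_abs]
      refine (lip_in_s g hg M hM φ s (σg φ)).trans ?_
      have hs' : |s - D.sc p| ≤ D.ds / 2 := by
        rw [Disc.Spix, Set.mem_Ico] at hs
        rw [abs_le]; constructor <;> linarith [hs.1, hs.2]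
      have htri : |s - σg φ| ≤ |s - D.sc p| + |D.sc p - τ q| + |τ q - σg φ| := by
        have h1 := abs_sub_le s (D.sc p) (σg φ)
        have h2 := abs_sub_le (D.sc p) (τ q) (σg φ)
        linarith
      have hsc' : |D.sc p - τ q| ≤ D.ds := by rw [abs_sub_comm]; exact hsp.le
      have : |s - σg φ| ≤ 3/2 * D.ds + B := by
        calc |s - σg φ| ≤ |s - D.sc p| + |D.sc p - τ q| + |τ q - σg φ| := htri
          _ ≤ D.ds/2 + D.ds + B := add_le_add (add_le_add hs' hsc') hτs
          _ ≤ 3/2 * D.ds + B := by linarith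
      exact mul_le_mul_of_nonneg_left this hM0
    have h2 := norm_setIntegral_le_of_norm_le_const (μ := volume) (s := D.Spix p)
      (hSpfin p) hbnd
    rw [Real.norm_eq_abs, measureReal_def, hSpm, ENNReal.toReal_ofReal hds.le] at h2
    exact h2
  -- ===== pointwise key bound =====
  have hkey : ∀ q < D.Nphi, ∀ φ ∈ D.Phipix q,
      |G φ - ∑ p ∈ Finset.range D.Ns, W q p * H p φ| ≤ C0 := by
    intro q hq φ hφ
    set S1 := ∑ p ∈ Finset.range D.Ns, W q p * D.ds with hS1
    have hdecomp : G φ - ∑ p ∈ Finset.range D.Ns, W q p * H p φ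
        = (∑ p ∈ Finset.range D.Ns, W q p * (D.ds * G φ - H p φ)) + (1 - S1) * G φ := by
      have h1 : ∑ p ∈ Finset.range D.Ns, W q p * (D.ds * G φ - H p φ)
          = S1 * G φ - ∑ p ∈ Finset.range D.Ns, W q p * H p φ := by
        rw [hS1, Finset.sum_mul, ← Finset.sum_sub_distrib]
        exact Finset.sum_congr rfl fun p _ => by ring
      rw [h1]; ring
    have hterm2 : (1 - S1) * G φ = 0 := by
      rcases eq_or_ne (G φ) 0 with h0 | h0
      · rw [h0, mul_zero]
      · have hσsmall : |σg φ| < c0 := by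
          by_contra hc
          push_neg at hc
          exact h0 (hz φ (σg φ) hc)
        have hτ_small : |τ q| ≤ 1 - D.ds / 2 := by
          have h1 : |τ q| ≤ |σg φ| + |τ q - σg φ| := by
            calc |τ q| = |σg φ + (τ q - σg φ)| := by ring_nf
              _ ≤ |σg φ| + |τ q - σg φ| := abs_add_le _ _
          have h2 := hτσ q hq φ hφ
          rw [hBdef] at h2
          linarith
        rw [hS1, hWsum_eq q hτ_small]
        ring
    have hterm1 : |∑ p ∈ Finset.range D.Ns, W q p * (D.ds * G φ - H p φ)|
        ≤ M * (3/2 * D.ds + B) := by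
      refine (Finset.abs_sum_le_sum_abs _ _).trans ?_
      have hstep : ∀ p ∈ Finset.range D.Ns,
          |W q p * (D.ds * G φ - H p φ)| ≤ (W q p * D.ds) * (M * (3/2 * D.ds + B)) := by
        intro p hp
        rcases eq_or_ne (W q p) 0 with h0 | h0
        · rw [h0]; simp
        · rw [abs_mul, abs_of_nonneg (hW_nonneg q p)]
          have hHb := hHbound q hq p φ hφ h0
          rw [abs_sub_comm] at hHb
          calc W q p * |D.ds * G φ - H p φ|
              ≤ W q p * ((M * (3/2 * D.ds + B)) * D.ds) :=
                mul_le_mul_of_nonneg_left hHb (hW_nonneg q p)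
            _ = (W q p * D.ds) * (M * (3/2 * D.ds + B)) := by ring
      refine (Finset.sum_le_sum hstep).trans ?_
      rw [← Finset.sum_mul]
      have hC0nn : 0 ≤ M * (3/2 * D.ds + B) := by positivity
      calc S1 * (M * (3/2 * D.ds + B)) ≤ 1 * (M * (3/2 * D.ds + B)) :=
          mul_le_mul_of_nonneg_right (hWsum_le q) hC0nn
        _ = M * (3/2 * D.ds + B) := one_mul _
    rw [hdecomp, hterm2, add_zero, hC0def]
    exact hterm1
  -- ===== reduce discretization to the (i,j) pixel =====
  have hx_mem : x ∈ D.Xpix i j := interior_subset hxin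
  have hx_notmem : ∀ i' j' : ℕ, ¬(i' = i ∧ j' = j) → x ∉ D.Xpix i' j' := by
    intro i' j' hne hmem
    rw [Disc.Xpix, Set.mem_prod] at hmem
    obtain ⟨hm1, hm2⟩ := hmem
    rw [Set.mem_Icc] at hm1 hm2
    have hxi := hxin'.1
    have hxj := hxin'.2
    rw [Set.mem_Ioo] at hxi hxj
    have e1 : (D.xc i' j').1 = ((i':ℝ) + 1/2) * D.dx - 1 := rfl
    have e2 : (D.xc i' j').2 = ((j':ℝ) + 1/2) * D.dx - 1 := rfl
    have e3 : (D.xc i j).1 = ((i:ℝ) + 1/2) * D.dx - 1 := rfl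
    have e4 : (D.xc i j).2 = ((j:ℝ) + 1/2) * D.dx - 1 := rfl
    rw [e1] at hm1
    rw [e2] at hm2
    rw [e3] at hxi
    rw [e4] at hxj
    have hij : i' ≠ i ∨ j' ≠ j := by tauto
    rcases hij with h | h
    · rcases lt_or_gt_of_ne h with hlt | hgt
      · have hcast : (i':ℝ) + 1 ≤ i := by exact_mod_cast Nat.succ_le_of_lt hlt
        nlinarith [hm1.2, hxi.1]
      · have hcast : (i:ℝ) + 1 ≤ i' := by exact_mod_cast Nat.succ_le_of_lt hgt
        nlinarith [hm1.1, hxi.2]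
    · rcases lt_or_gt_of_ne h with hlt | hgt
      · have hcast : (j':ℝ) + 1 ≤ j := by exact_mod_cast Nat.succ_le_of_lt hlt
        nlinarith [hm2.2, hxj.1]
      · have hcast : (j:ℝ) + 1 ≤ j' := by exact_mod_cast Nat.succ_le_of_lt hgt
        nlinarith [hm2.1, hxj.2]
  have hdisc : D.discBackproj (fun _ t => wpd D.ds t) g x
      = ∑ q ∈ Finset.range D.Nphi, ∑ p ∈ Finset.range D.Ns,
          W q p * ∫ y in D.Phipix q ×ˢ D.Spix p, g y := by
    unfold Disc.discBackproj
    rw [Finset.sum_eq_single_of_mem i (Finset.mem_range.2 hi) (fun b _ hbne =>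
      Finset.sum_eq_zero fun j' _ => by
        rw [Set.indicator_of_notMem (hx_notmem b j' (fun hc => hbne hc.1)), zero_mul])]
    rw [Finset.sum_eq_single_of_mem j (Finset.mem_range.2 hj) (fun b _ hbne => by
      rw [Set.indicator_of_notMem (hx_notmem i b (fun hc => hbne hc.2)), zero_mul])]
    rw [Set.indicator_of_mem hx_mem, one_mul]
  -- ===== split the backprojection over angular pixels =====
  have hpart : ∀ n, n ≤ D.Nphi →
      (∑ q ∈ Finset.range n, ∫ φ in D.Phipix q, G φ) = ∫ φ in Ico 0 (L n), G φ := by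
    intro n hn
    induction n with
    | zero => rw [hL0]; simp
    | succ m ihm =>
      have hm : m < D.Nphi := by omega
      rw [Finset.sum_range_succ, ihm (by omega)]
      have hPhieq : D.Phipix m = Ico (L m) (L (m+1)) := by
        rw [Disc.Phipix, hLlow m hm, ← hLhigh m hm]
      rw [hPhieq]
      have h0L : 0 ≤ L m := by rw [hLlow m hm]; exact hlow_nonneg m hm
      have hLL : L m ≤ L (m+1) := by
        rw [hLlow m hm, ← hLhigh m hm]; exact hlh m hm
      rw [← setIntegral_union (Set.Ico_disjoint_Ico_same)
        measurableSet_Ico (hGint 0 (L m)) (hGint (L m) (L (m+1))),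
        Set.Ico_union_Ico_eq_Ico h0L hLL]
  have hback : Backproj g x = ∑ q ∈ Finset.range D.Nphi, ∫ φ in D.Phipix q, G φ := by
    have h1 := hpart D.Nphi le_rfl
    rw [hLN] at h1
    rw [h1]
    rfl
  -- ===== assemble =====
  have hswap : ∀ q, (∑ p ∈ Finset.range D.Ns, W q p * ∫ φ in D.Phipix q, H p φ)
      = ∫ φ in D.Phipix q, (∑ p ∈ Finset.range D.Ns, W q p * H p φ) := by
    intro q
    rw [integral_finset_sum _ (fun p _ => (hHint q p).const_mul (W q p))]
    exact Finset.sum_congr rfl fun p _ => (integral_const_mul _ _).symm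
  have hdiff : Backproj g x - D.discBackproj (fun _ t => wpd D.ds t) g x
      = ∑ q ∈ Finset.range D.Nphi,
          ∫ φ in D.Phipix q, (G φ - ∑ p ∈ Finset.range D.Ns, W q p * H p φ) := by
    rw [hback, hdisc, ← Finset.sum_sub_distrib]
    refine Finset.sum_congr rfl fun q hq => ?_
    rw [show (∑ p ∈ Finset.range D.Ns, W q p * ∫ y in D.Phipix q ×ˢ D.Spix p, g y)
        = ∑ p ∈ Finset.range D.Ns, W q p * ∫ φ in D.Phipix q, H p φ from
        Finset.sum_congr rfl fun p _ => by rw [hfub q p]]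
    rw [hswap q, ← integral_sub (hGPhi q) (hSumInt q)]
  rw [hdiff]
  have hPhivol : ∀ q, volume (D.Phipix q) = ENNReal.ofReal (D.phihigh q - D.philow q) :=
    fun q => Real.volume_Ico
  have hqbound : ∀ q ∈ Finset.range D.Nphi,
      |∫ φ in D.Phipix q, (G φ - ∑ p ∈ Finset.range D.Ns, W q p * H p φ)|
        ≤ C0 * (L (q+1) - L q) := by
    intro q hqm
    have hq := Finset.mem_range.1 hqm
    have h1 := norm_setIntegral_le_of_norm_le_const (μ := volume) (s := D.Phipix q) (C := C0)
      (by rw [hPhivol q]; exact ENNReal.ofReal_lt_top)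
      (fun φ hφ => by rw [Real.norm_eq_abs]; exact hkey q hq φ hφ)
    rw [Real.norm_eq_abs, measureReal_def, hPhivol q, ENNReal.toReal_ofReal (by linarith [hlh q hq])] at h1
    refine h1.trans (le_of_eq ?_)
    rw [hLhigh q hq, hLlow q hq]
  have hC0nn : 0 ≤ C0 := by rw [hC0def]; positivity
  calc |∑ q ∈ Finset.range D.Nphi,
          ∫ φ in D.Phipix q, (G φ - ∑ p ∈ Finset.range D.Ns, W q p * H p φ)|
      ≤ ∑ q ∈ Finset.range D.Nphi,
          |∫ φ in D.Phipix q, (G φ - ∑ p ∈ Finset.range D.Ns, W q p * H p φ)| :=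
        Finset.abs_sum_le_sum_abs _ _
    _ ≤ ∑ q ∈ Finset.range D.Nphi, C0 * (L (q+1) - L q) := Finset.sum_le_sum hqbound
    _ = C0 * π := by
        rw [← Finset.mul_sum, Finset.sum_range_sub L, hLN, hL0, sub_zero]
    _ ≤ 3 / 2 * π * (D.ds + D.dx + D.dphi) * M := by
        have hdxs : D.dx / Real.sqrt 2 ≤ D.dx := div_le_self hdx.le hsqrt2'
        have hkey2 : M * (3/2 * D.ds + B) ≤ 3/2 * (D.ds + D.dx + D.dphi) * M := by
          rw [hBdef]
          nlinarith [hdxs, hM0, hdx.le, hdphi0, hds.le]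
        calc C0 * π = π * (M * (3/2 * D.ds + B)) := by rw [hC0def]; ring
          _ ≤ π * (3/2 * (D.ds + D.dx + D.dphi) * M) :=
              mul_le_mul_of_nonneg_left hkey2 hπ.le
          _ = 3 / 2 * π * (D.ds + D.dx + D.dphi) * M := by ring
end
end
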